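/- Let G be a connected word-representable simple graph on a finite nonempty vertex set V whose representation number is k. Then every k-uniform word that represents G is square-free. -/

import Mathlib

variable {V : Type*} [DecidableEq V]

/-- Distinct letters `x` and `y` alternate in `w`: deleting all other letters
leaves no two equal consecutive letters. -/
def Alternates (x y : V) (w : List V) : Prop :=
  (w.filter fun z => decide (z = x ∨ z = y)).Chain' (· ≠ ·)

/-- `w` represents the graph `G`: every vertex occurs in `w`, and distinct
vertices alternate in `w` iff they are adjacent in `G`. -/
def Represents (G : SimpleGraph V) (w : List V) : Prop :=
  (∀ v : V, v ∈ w) ∧ ∀ x y : V, x ≠ y → (Alternates x y w ↔ G.Adj x y)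

/-- `w` contains a square. -/
def HasSquare (w : List V) : Prop :=
  ∃ u X v : List V, X ≠ [] ∧ w = u ++ X ++ X ++ v

/-- `w` is square-free. -/
def SqFree (w : List V) : Prop := ¬ HasSquare w

/-- `w` is `k`-uniform: every letter of `V` occurs exactly `k` times. -/
def KUniform (k : ℕ) (w : List V) : Prop := ∀ v : V, w.count v = k

/-- The representation number of `G` is `k`: `k` is the least number such that
some `k`-uniform word represents `G`. -/
def RepNumIs (G : SimpleGraph V) (k : ℕ) : Prop :=
  (∃ w : List V, KUniform k w ∧ Represents G w) ∧
    ∀ k' : ℕ, (∃ w : List V, KUniform k' w ∧ Represents G w) → k ≤ k'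

/-! ### Auxiliary lemmas -/

private lemma cons2_count {x y a b : V} (hxy : x ≠ y) (hab : a ≠ b)
    (ha : a = x ∨ a = y) (hb : b = x ∨ b = y) (t : List V) :
    (a :: b :: t).count x = t.count x + 1 ∧ (a :: b :: t).count y = t.count y + 1 := by
  rcases ha with rfl | rfl
  · have hb' : b = y := by
      rcases hb with rfl | rfl
      · exact absurd rfl hab
      · rfl
    subst hb'
    constructor <;> simp [List.count_cons, hxy, Ne.symm hxy]
  · have hb' : b = x := by
      rcases hb with rfl | rfl
      · rfl
      · exact absurd rfl hab
    subst hb'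
    constructor <;> simp [List.count_cons, hxy, Ne.symm hxy]

private lemma alt_count {x y : V} (hxy : x ≠ y) :
    ∀ l : List V, l.Chain' (· ≠ ·) → (∀ z ∈ l, z = x ∨ z = y) →
      l.count x ≤ l.count y + 1 ∧ l.count y ≤ l.count x + 1
  | [] => by simp
  | [a] => by
    intro _ hm
    rcases hm a (by simp) with rfl | rfl <;>
      simp [List.count_cons, hxy, Ne.symm hxy]
  | a :: b :: t => by
    intro hch hm
    have hab : a ≠ b := (List.isChain_cons_cons.mp hch).1
    have ih := alt_count hxy t (hch.tail.tail)
      (fun z hz => hm z (by simp [hz]))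
    obtain ⟨h1, h2⟩ := cons2_count hxy hab (hm a (by simp)) (hm b (by simp)) t
    omega

private lemma alt_last_ne_head {x y : V} (hxy : x ≠ y) :
    ∀ l : List V, l.Chain' (· ≠ ·) → (∀ z ∈ l, z = x ∨ z = y) →
      l.count x = l.count y →
      ∀ p ∈ l.getLast?, ∀ q ∈ l.head?, p ≠ q
  | [] => by simp
  | [a] => by
    intro _ hm hcnt
    exfalso
    rcases hm a (by simp) with rfl | rfl <;>
      simp [List.count_cons, hxy, Ne.symm hxy] at hcnt
  | a :: b :: t => by
    intro hch hm hcnt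
    have hab : a ≠ b := (List.isChain_cons_cons.mp hch).1
    obtain ⟨h1, h2⟩ := cons2_count hxy hab (hm a (by simp)) (hm b (by simp)) t
    match t, hch, hm, h1, h2, hcnt with
    | [], _, _, _, _, _ =>
      intro p hp q hq
      simp only [List.getLast?_cons_cons, List.getLast?_singleton, Option.mem_def,
        Option.some_inj, List.head?_cons] at hp hq
      subst hp; subst hq
      exact hab.symm
    | c :: t', hch, hm, h1, h2, hcnt =>
      have hac : a = c := by
        have hbc : b ≠ c := ((List.isChain_cons_cons.mp (hch.tail)).1)
        rcases hm a (by simp) with rfl | rfl <;> rcases hm b (by simp) with hb | hb <;>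
          rcases hm c (by simp) with hc | hc <;> simp_all
      have ih := alt_last_ne_head hxy (c :: t') (hch.tail.tail)
        (fun z hz => hm z (by simp [hz])) (by omega)
      intro p hp q hq
      simp only [List.getLast?_cons_cons, Option.mem_def] at hp
      simp only [List.head?_cons, Option.mem_def, Option.some_inj] at hq
      subst hq
      rw [hac]
      exact ih p (Option.mem_def.mpr hp) c (Option.mem_def.mpr rfl)

private lemma mem_of_mem_filter_two {a b : V} {l : List V} :
    ∀ z ∈ l.filter (fun z => decide (z = a ∨ z = b)), z = a ∨ z = b := by
  intro z hz
  have := (List.mem_filter.mp hz).2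
  simpa using this

omit [DecidableEq V] in
private lemma chain'_of_chain'_square {R : V → V → Prop} {A B C : List V}
    (h : List.Chain' R (A ++ B ++ B ++ C)) : List.Chain' R (A ++ B ++ C) := by
  rcases eq_or_ne B [] with rfl | hB
  · simpa using h
  · rw [List.Chain', List.append_assoc, List.append_assoc, List.isChain_append] at h
    obtain ⟨hA, hBC, hJ⟩ := h
    rw [List.isChain_append] at hBC
    obtain ⟨hB1, hBC2, hJ2⟩ := hBC
    rw [List.isChain_append] at hBC2
    obtain ⟨hB2, hC, hJ3⟩ := hBC2
    rw [List.Chain', List.append_assoc, List.isChain_append]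
    refine ⟨hA, ?_, ?_⟩
    · rw [List.isChain_append]
      exact ⟨hB1, hC, hJ3⟩
    · intro p hp q hq
      apply hJ p hp
      rw [List.head?_append_of_ne_nil _ hB] at hq ⊢
      exact hq

omit [DecidableEq V] in
private lemma chain'_square_of_chain' {R : V → V → Prop} {A B C : List V} (hB : B ≠ [])
    (hlh : ∀ p ∈ B.getLast?, ∀ q ∈ B.head?, R p q)
    (h : List.Chain' R (A ++ B ++ C)) : List.Chain' R (A ++ B ++ B ++ C) := by
  rw [List.Chain', List.append_assoc, List.isChain_append] at h
  obtain ⟨hA, hBC, hJ⟩ := h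
  rw [List.isChain_append] at hBC
  obtain ⟨hB1, hC, hJ3⟩ := hBC
  rw [List.Chain', List.append_assoc, List.append_assoc, List.isChain_append]
  refine ⟨hA, ?_, ?_⟩
  · rw [List.isChain_append]
    refine ⟨hB1, ?_, ?_⟩
    · rw [List.isChain_append]
      exact ⟨hB1, hC, hJ3⟩
    · intro p hp q hq
      rw [List.head?_append_of_ne_nil _ hB] at hq
      exact hlh p hp q hq
  · intro p hp q hq
    rw [List.head?_append_of_ne_nil _ hB] at hq
    apply hJ p hp
    rw [List.head?_append_of_ne_nil _ hB]
    exact hq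

omit [DecidableEq V] in
private lemma reach_closed {G : SimpleGraph V} {P : V → Prop}
    (hP : ∀ a b, G.Adj a b → P a → P b) :
    ∀ {a b : V}, G.Reachable a b → P a → P b := by
  intro a b h
  obtain ⟨W⟩ := h
  induction W with
  | nil => exact id
  | cons h p ih => exact fun ha => ih (hP _ _ h ha)

theorem kUniform_word_of_repNum_is_squarefree {V : Type*} [DecidableEq V] [Fintype V]
    [Nonempty V] (G : SimpleGraph V) (hconn : G.Connected)
    (k : ℕ) (hrn : RepNumIs G k) :
    ∀ w : List V, KUniform k w → Represents G w → SqFree w := by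
  intro w hkU hrep
  rintro ⟨u, X, v, hX, rfl⟩
  obtain ⟨v0⟩ := ‹Nonempty V›
  -- nonemptiness of the filter of X on any pair whose first element is in X
  have hFne : ∀ (a b : V), a ∈ X →
      X.filter (fun z => decide (z = a ∨ z = b)) ≠ [] := by
    intro a b haX h
    have : a ∈ X.filter (fun z => decide (z = a ∨ z = b)) :=
      List.mem_filter.mpr ⟨haX, by simp⟩
    rw [h] at this
    exact List.not_mem_nil this
  -- Step A: X contains every vertex.
  have hadjX : ∀ a b : V, G.Adj a b → a ∈ X → b ∈ X := by
    intro a b hab haX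
    by_contra hbX
    have hAlt : Alternates a b (u ++ X ++ X ++ v) := (hrep.2 a b hab.ne).mpr hab
    unfold Alternates at hAlt
    rw [List.filter_append, List.filter_append, List.filter_append] at hAlt
    have hne := hFne a b haX
    have hmid : (X.filter (fun z => decide (z = a ∨ z = b)) ++
        X.filter (fun z => decide (z = a ∨ z = b))).Chain' (· ≠ ·) :=
      hAlt.infix ⟨u.filter (fun z => decide (z = a ∨ z = b)), v.filter (fun z => decide (z = a ∨ z = b)), by simp only [List.append_assoc]⟩
    rw [List.Chain', List.isChain_append] at hmid
    obtain ⟨-, -, hJ⟩ := hmid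
    have hFXa : ∀ z ∈ X.filter (fun z => decide (z = a ∨ z = b)), z = a := by
      intro z hz
      rcases mem_of_mem_filter_two z hz with rfl | rfl
      · rfl
      · exact absurd (List.mem_filter.mp hz).1 hbX
    exact hJ _ (Option.mem_def.mpr (List.getLast?_eq_getLast hne)) _
      (Option.mem_def.mpr (List.head?_eq_head hne))
      (by rw [hFXa _ (List.getLast_mem hne), hFXa _ (List.head_mem hne)])
  have hallX : ∀ z : V, z ∈ X := by
    obtain ⟨x0, hx0⟩ := List.exists_mem_of_ne_nil X hX
    intro z
    exact reach_closed hadjX (hconn.preconnected x0 z) hx0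
  -- Step B: counts in X are constant.
  have hce : ∀ a b : V, G.Adj a b → X.count a = X.count b := by
    intro a b hab
    have hAlt : Alternates a b (u ++ X ++ X ++ v) := (hrep.2 a b hab.ne).mpr hab
    unfold Alternates at hAlt
    rw [List.filter_append, List.filter_append, List.filter_append] at hAlt
    have hmid : (X.filter (fun z => decide (z = a ∨ z = b)) ++
        X.filter (fun z => decide (z = a ∨ z = b))).Chain' (· ≠ ·) :=
      hAlt.infix ⟨u.filter (fun z => decide (z = a ∨ z = b)), v.filter (fun z => decide (z = a ∨ z = b)), by simp only [List.append_assoc]⟩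
    have hcnt := alt_count hab.ne _ hmid (by
      intro z hz
      rcases List.mem_append.mp hz with h | h <;> exact mem_of_mem_filter_two z h)
    rw [List.count_append, List.count_append,
      List.count_filter (by simp), List.count_filter (by simp)] at hcnt
    omega
  have hconst : ∀ z : V, X.count z = X.count v0 := by
    intro z
    exact reach_closed (P := fun t => X.count t = X.count v0)
      (fun a b hab h => (hce a b hab).symm.trans h)
      (hconn.preconnected v0 z) rfl
  set c := X.count v0 with hc
  have hc1 : 1 ≤ c := by
    have : 0 < X.count v0 := List.count_pos_iff.mpr (hallX v0)
    omega
  have hk2c : 2 * c ≤ k := by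
    have h1 := hkU v0
    rw [List.count_append, List.count_append, List.count_append] at h1
    omega
  -- Step C: u ++ X ++ v is (k-c)-uniform and represents G.
  have hKU' : KUniform (k - c) (u ++ X ++ v) := by
    intro z
    have h1 := hkU z
    have h2 := hconst z
    rw [List.count_append, List.count_append, List.count_append] at h1
    rw [List.count_append, List.count_append]
    omega
  have hrep' : Represents G (u ++ X ++ v) := by
    constructor
    · intro z
      simp [hallX z]
    · intro a b hne
      constructor
      · intro hAlt'
        by_contra hna
        have hnAlt : ¬ Alternates a b (u ++ X ++ X ++ v) :=
          fun h => hna ((hrep.2 a b hne).mp h)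
        apply hnAlt
        unfold Alternates at hAlt' ⊢
        rw [List.filter_append, List.filter_append, List.filter_append]
        rw [List.filter_append, List.filter_append] at hAlt'
        have hne' := hFne a b (hallX a)
        have hFXch : (X.filter (fun z => decide (z = a ∨ z = b))).Chain' (· ≠ ·) :=
          hAlt'.infix ⟨_, _, rfl⟩
        have hcnt : (X.filter (fun z => decide (z = a ∨ z = b))).count a =
            (X.filter (fun z => decide (z = a ∨ z = b))).count b := by
          rw [List.count_filter (by simp), List.count_filter (by simp)]
          rw [hconst a, hconst b]
        have hlh := alt_last_ne_head hne _ hFXch (mem_of_mem_filter_two) hcnt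
        exact chain'_square_of_chain' hne' hlh hAlt'
      · intro hab
        have hAlt : Alternates a b (u ++ X ++ X ++ v) := (hrep.2 a b hne).mpr hab
        unfold Alternates at hAlt ⊢
        rw [List.filter_append, List.filter_append, List.filter_append] at hAlt
        rw [List.filter_append, List.filter_append]
        exact chain'_of_chain'_square hAlt
  have := hrn.2 (k - c) ⟨u ++ X ++ v, hKU', hrep'⟩
  omega
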